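/- Let 𝓜 ⊆ ℂ^4 be defined by w_1 − conj(w_1) = 2i z conj(z), w_2 − conj(w_2) = 2i z conj(z)(z + conj(z)), w_3 − conj(w_3) = 2i z conj(z)(z² + (3/2) z conj(z) + conj(z)²), with weights [z] = 1, [w_1] = 2, [w_2] = 3, [w_3] = 4. The space g_{−1} of weighted homogeneous polynomial infinitesimal CR-automorphisms of 𝓜 of weight −1 (i.e. those with Z, W^1, W^2, W^3 weighted homogeneous of weights 0, 1, 2, 3 respectively) is a 2-dimensional real vector space spanned by the tuples X_1 = (1, 2iz, 2iz² + 4w_1, 2iz³ + 6w_2) and X_2 = (i, 2z, 2z², 2z³). -/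

import Mathlib

open MvPolynomial Complex

noncomputable section

/-- Points of ℂ⁴ in coordinates (z, w₁, w₂, w₃). -/
abbrev Pt := Fin 4 → ℂ

/-- Polynomials in ℂ[z, w₁, w₂, w₃] : variable 0 is z, variables 1, 2, 3 are w₁, w₂, w₃. -/
abbrev CPoly := MvPolynomial (Fin 4) ℂ

/-- Tuples (Z, W¹, W², W³), identified with the vector field Z ∂_z + Σ_l W^l ∂_{w_l}. -/
abbrev Tup := Fin 4 → CPoly

/-- The CR-manifold 𝓜 ⊆ ℂ⁴, defined by w₁ − w̄₁ = 2i z z̄, w₂ − w̄₂ = 2i z z̄ (z + z̄),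
w₃ − w̄₃ = 2i z z̄ (z² + (3/2) z z̄ + z̄²). -/
def Mcal : Set Pt :=
  {p | p 1 - starRingEnd ℂ (p 1) = 2 * I * p 0 * starRingEnd ℂ (p 0) ∧
       p 2 - starRingEnd ℂ (p 2) =
         2 * I * p 0 * starRingEnd ℂ (p 0) * (p 0 + starRingEnd ℂ (p 0)) ∧
       p 3 - starRingEnd ℂ (p 3) =
         2 * I * p 0 * starRingEnd ℂ (p 0) *
           ((p 0) ^ 2 + (3 / 2 : ℂ) * p 0 * starRingEnd ℂ (p 0) +
             (starRingEnd ℂ (p 0)) ^ 2)}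

/-- (Z, W¹, W², W³) is a (polynomial) infinitesimal CR-automorphism of 𝓜 : the three
tangency identities hold at every point of 𝓜. -/
def IsCRAut (F : Tup) : Prop :=
  ∀ p ∈ Mcal,
    (eval p (F 1) - starRingEnd ℂ (eval p (F 1))
      - 2 * I * starRingEnd ℂ (p 0) * eval p (F 0)
      - 2 * I * p 0 * starRingEnd ℂ (eval p (F 0)) = 0) ∧
    (eval p (F 2) - starRingEnd ℂ (eval p (F 2))
      - 4 * I * p 0 * starRingEnd ℂ (p 0) * eval p (F 0)
      - 2 * I * (starRingEnd ℂ (p 0)) ^ 2 * eval p (F 0)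
      - 2 * I * (p 0) ^ 2 * starRingEnd ℂ (eval p (F 0))
      - 4 * I * p 0 * starRingEnd ℂ (p 0) * starRingEnd ℂ (eval p (F 0)) = 0) ∧
    (eval p (F 3) - starRingEnd ℂ (eval p (F 3))
      - 6 * I * (p 0) ^ 2 * starRingEnd ℂ (p 0) * eval p (F 0)
      - 6 * I * p 0 * (starRingEnd ℂ (p 0)) ^ 2 * eval p (F 0)
      - 2 * I * (starRingEnd ℂ (p 0)) ^ 3 * eval p (F 0)
      - 2 * I * (p 0) ^ 3 * starRingEnd ℂ (eval p (F 0))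
      - 6 * I * (p 0) ^ 2 * starRingEnd ℂ (p 0) * starRingEnd ℂ (eval p (F 0))
      - 6 * I * p 0 * (starRingEnd ℂ (p 0)) ^ 2 * starRingEnd ℂ (eval p (F 0)) = 0)

/-- The weights [z] = 1, [w₁] = 2, [w₂] = 3, [w₃] = 4. -/
def wt : Fin 4 → ℕ := ![1, 2, 3, 4]

/-- X₁ = (1, 2iz, 2iz² + 4w₁, 2iz³ + 6w₂). -/
def X₁ : Tup :=
  ![1, C (2 * I) * X 0, C (2 * I) * X 0 ^ 2 + C 4 * X 1, C (2 * I) * X 0 ^ 3 + C 6 * X 2]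

/-- X₂ = (i, 2z, 2z², 2z³). -/
def X₂ : Tup := ![C I, C 2 * X 0, C 2 * X 0 ^ 2, C 2 * X 0 ^ 3]

/-! A tuple of weight −1 has Z = c, W¹ = α z, W² = β z² + γ w₁, W³ = δ z³ + ε z w₁ + ζ w₂, since
these are the only monomials of weights 0, 1, 2, 3. Restricted to 𝓜, the three tangency identities
are ℝ-linear conditions on (c, α, β, γ, δ, ε, ζ), and evaluating them at a few points of 𝓜 forces
α = β = δ = 2i c̄, γ = 2(c + c̄), ε = 0 and ζ = 3(c + c̄). For c = a + ib this is a X₁ + b X₂. -/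

open ComplexConjugate

lemma MvPolynomial.IsWeightedHomogeneous.ext_of_coeff {σ R M : Type*} [CommSemiring R]
    [AddCommMonoid M] {w : σ → M} {n : M} {φ ψ : MvPolynomial σ R}
    (hφ : φ.IsWeightedHomogeneous w n) (hψ : ψ.IsWeightedHomogeneous w n)
    (h : ∀ d, Finsupp.weight w d = n → coeff d φ = coeff d ψ) : φ = ψ := by
  ext d
  by_cases hd : Finsupp.weight w d = n
  · exact h d hd
  · rw [hφ.coeff_eq_zero d hd, hψ.coeff_eq_zero d hd]

section WeightedMonomials

open Finsupp

variable {d : Fin 4 →₀ ℕ}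

lemma weight_wt (d : Fin 4 →₀ ℕ) : weight wt d = d 0 + 2 * d 1 + 3 * d 2 + 4 * d 3 := by
  simp [weight_apply, sum_fintype, Fin.sum_univ_four, wt]
  ring

lemma eq_zero_of_weight_wt_eq_zero (h : weight wt d = 0) : d = 0 := by
  rw [weight_wt] at h
  simp [Finsupp.ext_iff, Fin.forall_fin_succ]
  omega

lemma eq_of_weight_wt_eq_one (h : weight wt d = 1) : d = single 0 1 := by
  rw [weight_wt] at h
  simp [Finsupp.ext_iff, Fin.forall_fin_succ]
  omega

lemma eq_or_eq_of_weight_wt_eq_two (h : weight wt d = 2) : d = single 0 2 ∨ d = single 1 1 := by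
  rw [weight_wt] at h
  have : d 2 = 0 ∧ d 3 = 0 := by omega
  simp [Finsupp.ext_iff, Fin.forall_fin_succ]
  omega

lemma eq_or_eq_or_eq_of_weight_wt_eq_three (h : weight wt d = 3) :
    d = single 0 3 ∨ d = single 0 1 + single 1 1 ∨ d = single 2 1 := by
  rw [weight_wt] at h
  have : d 3 = 0 := by omega
  simp [Finsupp.ext_iff, Fin.forall_fin_succ]
  omega

end WeightedMonomials

def weightNegOneTup (c α β γ δ ε ζ : ℂ) : Tup :=
  ![C c, C α * X 0, C β * X 0 ^ 2 + C γ * X 1, C δ * X 0 ^ 3 + C ε * (X 0 * X 1) + C ζ * X 2]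

lemma isWeightedHomogeneous_weightNegOneTup {c α β γ δ ε ζ : ℂ} (i : Fin 4) :
    (weightNegOneTup c α β γ δ ε ζ i).IsWeightedHomogeneous wt i := by
  have hX (j : Fin 4) : (X j : CPoly).IsWeightedHomogeneous wt (wt j) :=
    isWeightedHomogeneous_X ℂ wt j
  have hC (a : ℂ) : (C a : CPoly).IsWeightedHomogeneous wt 0 := isWeightedHomogeneous_C wt a
  fin_cases i
  · exact hC c
  · simpa [weightNegOneTup, wt] using (hC α).mul (hX 0)
  · simpa [weightNegOneTup, wt] using ((hC β).mul ((hX 0).pow 2)).add ((hC γ).mul (hX 1))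
  · simpa [weightNegOneTup, wt] using (((hC δ).mul ((hX 0).pow 3)).add
      ((hC ε).mul ((hX 0).mul (hX 1)))).add ((hC ζ).mul (hX 2))

open Finsupp in
lemma exists_eq_weightNegOneTup {F : Tup} (hF : ∀ i : Fin 4, (F i).IsWeightedHomogeneous wt i) :
    ∃ c α β γ δ ε ζ, F = weightNegOneTup c α β γ δ ε ζ := by
  refine ⟨coeff 0 (F 0), coeff (single 0 1) (F 1), coeff (single 0 2) (F 2),
    coeff (single 1 1) (F 2), coeff (single 0 3) (F 3), coeff (single 0 1 + single 1 1) (F 3),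
    coeff (single 2 1) (F 3), funext fun i => ?_⟩
  refine (hF i).ext_of_coeff (isWeightedHomogeneous_weightNegOneTup i) fun d hd => ?_
  fin_cases i
  · obtain rfl := eq_zero_of_weight_wt_eq_zero hd
    simp [weightNegOneTup]
  · obtain rfl := eq_of_weight_wt_eq_one hd
    simp [weightNegOneTup, coeff_X]
  · obtain rfl | rfl := eq_or_eq_of_weight_wt_eq_two hd <;>
      simp [weightNegOneTup, coeff_X, coeff_X_pow, Finsupp.ext_iff, Fin.forall_fin_succ]
  · obtain rfl | rfl | rfl := eq_or_eq_or_eq_of_weight_wt_eq_three hd <;>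
      simp [weightNegOneTup, coeff_X, coeff_X_pow, coeff_X_mul', Finsupp.ext_iff,
        Fin.forall_fin_succ]

def mcalPoint (z : ℂ) (u₁ u₂ : ℝ) : Pt :=
  ![z, u₁ + I * z * conj z, u₂ + I * z * conj z * (z + conj z),
    I * z * conj z * (z ^ 2 + 3 / 2 * z * conj z + conj z ^ 2)]

lemma mcalPoint_mem (z : ℂ) (u₁ u₂ : ℝ) : mcalPoint z u₁ u₂ ∈ Mcal := by
  refine ⟨?_, ?_, ?_⟩ <;> simp [mcalPoint, map_ofNat] <;> ring

lemma isCRAut_weightNegOneTup_iff {c α β γ δ ε ζ : ℂ} :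
    IsCRAut (weightNegOneTup c α β γ δ ε ζ) ↔
      α = 2 * I * conj c ∧ β = 2 * I * conj c ∧ γ = 2 * (c + conj c) ∧
        δ = 2 * I * conj c ∧ ε = 0 ∧ ζ = 3 * (c + conj c) := by
  constructor
  · intro h
    have e z u₁ u₂ := h _ (mcalPoint_mem z u₁ u₂)
    simp [mcalPoint, weightNegOneTup] at e
    -- Split into real and imaginary parts, these instances form a real linear system in
    -- c, α, …, ζ whose only solution is the claimed one.
    obtain ⟨h1₁, h1₂, h1₃⟩ := e 1 0 0
    obtain ⟨hI₁, hI₂, hI₃⟩ := e I 0 0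
    obtain ⟨-, h1I₂, h1I₃⟩ := e (1 + I) 0 0
    obtain ⟨-, -, h1u₃⟩ := e 1 1 0
    obtain ⟨-, -, hIu₃⟩ := e I 1 0
    obtain ⟨-, hu₁, -⟩ := e 0 1 0
    obtain ⟨-, -, hu₂⟩ := e 0 0 1
    clear e h
    simp [Complex.ext_iff, pow_succ] at *
    refine ⟨⟨?_, ?_⟩, ⟨?_, ?_⟩, ⟨?_, ?_⟩, ⟨?_, ?_⟩, ⟨?_, ?_⟩, ?_, ?_⟩ <;> linarith
  · rintro ⟨rfl, rfl, rfl, rfl, rfl, rfl⟩ p ⟨h₁, h₂, -⟩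
    simp [weightNegOneTup, map_ofNat]
    exact ⟨by ring, by linear_combination 2 * (c + conj c) * h₁,
      by linear_combination 3 * (c + conj c) * h₂⟩

lemma smul_X₁_add_smul_X₂ (a b : ℝ) :
    (a : ℂ) • X₁ + (b : ℂ) • X₂ =
      weightNegOneTup (a + b * I) (2 * I * conj (a + b * I)) (2 * I * conj (a + b * I))
        (2 * ((a + b * I) + conj (a + b * I))) (2 * I * conj (a + b * I)) 0
        (3 * ((a + b * I) + conj (a + b * I))) := by
  have h₁ : 2 * I * conj (a + b * I) = a * (2 * I) + b * 2 := by
    simp [Complex.ext_iff, mul_comm]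
  have h₂ : (a + b * I) + conj (a + b * I) = 2 * a := by
    simp [Complex.ext_iff, two_mul]
  rw [h₁, h₂]
  funext i
  fin_cases i <;> simp [X₁, X₂, weightNegOneTup, smul_eq_C_mul, map_ofNat] <;> ring

/-- the space g₋₁ of weighted homogeneous polynomial infinitesimal
CR-automorphisms of 𝓜 of weight −1, i.e. with Z, W¹, W², W³ weighted homogeneous of
weights 0, 1, 2, 3, is the 2-dimensional real vector space spanned by X₁ and X₂. -/
theorem stmt16 :
    -- X₁ and X₂ are linearly independent over ℝ :
    (∀ a b : ℝ, (a : ℂ) • X₁ + (b : ℂ) • X₂ = 0 → a = 0 ∧ b = 0) ∧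
    -- and g₋₁ is exactly their real span :
    (∀ F : Tup,
      (IsCRAut F ∧
        (F 0).IsWeightedHomogeneous wt 0 ∧
        (F 1).IsWeightedHomogeneous wt 1 ∧
        (F 2).IsWeightedHomogeneous wt 2 ∧
        (F 3).IsWeightedHomogeneous wt 3)
      ↔ ∃ a b : ℝ, F = (a : ℂ) • X₁ + (b : ℂ) • X₂) := by
  refine ⟨fun a b h => ?_, fun F => ⟨?_, ?_⟩⟩
  · have h₀ := congrFun h 0
    rw [smul_X₁_add_smul_X₂] at h₀
    simp only [weightNegOneTup, Matrix.cons_val_zero, Pi.zero_apply, C_eq_zero] at h₀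
    simpa [Complex.ext_iff] using h₀
  · rintro ⟨hF, h₀, h₁, h₂, h₃⟩
    obtain ⟨c, α, β, γ, δ, ε, ζ, rfl⟩ :=
      exists_eq_weightNegOneTup fun i => by fin_cases i <;> assumption
    obtain ⟨rfl, rfl, rfl, rfl, rfl, rfl⟩ := isCRAut_weightNegOneTup_iff.1 hF
    exact ⟨c.re, c.im, by rw [smul_X₁_add_smul_X₂, re_add_im]⟩
  · rintro ⟨a, b, rfl⟩
    rw [smul_X₁_add_smul_X₂]
    exact ⟨isCRAut_weightNegOneTup_iff.2 ⟨rfl, rfl, rfl, rfl, rfl, rfl⟩,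
      isWeightedHomogeneous_weightNegOneTup 0, isWeightedHomogeneous_weightNegOneTup 1,
      isWeightedHomogeneous_weightNegOneTup 2, isWeightedHomogeneous_weightNegOneTup 3⟩
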